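/- arXiv:1507.00894 — 2 statements merged into one kernel-verified Lean document; each statement's English description precedes it below -/
import Mathlib

section
/- Let π₁ and π₂ be probability measures on ℝ such that for i = 1,2, x^{α_i}·π_i((-∞,-x]) → c_i⁻ and x^{α_i}·π_i((x,∞)) → c_i⁺ as x → ∞, with c_i⁻ + c_i⁺ > 0 and 1 < α₁ < α₂ < 2, and suppose both have finite first absolute moment. Then there exists θ̄ ∈ (0,1) such that φ_{π₁}(θ) ≤ φ_{π₂}(θ) for every θ ∈ (θ̄, 1). -/
open MeasureTheory Set Filter
set_option maxHeartbeats 1000000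

/-- Cdf of the absolute value of a random variable with law `π`. -/
noncomputable def absCdf (π : Measure ℝ) (x : ℝ) : ℝ :=
  (π (Icc (-x) x)).toReal

/-- Generalized quantile `A⁻¹(t) = inf {x | A_π(x) > t}`. -/
noncomputable def absQuantile (π : Measure ℝ) (t : ℝ) : ℝ :=
  sInf {x : ℝ | absCdf π x > t}

/-- Extended Lorenz concentration function
`φ_π(θ) = (1 / M(A_π)) ∫₀^θ A_π⁻¹(t) dt`, with `M(A_π) = ∫ |x| dπ`. -/
noncomputable def lorenzFn (π : Measure ℝ) (θ : ℝ) : ℝ :=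
  (∫ x, |x| ∂π)⁻¹ * ∫ t in (0 : ℝ)..θ, absQuantile π t

namespace WPL

variable (π : Measure ℝ) [IsProbabilityMeasure π]

lemma absCdf_nonneg (x : ℝ) : 0 ≤ absCdf π x := ENNReal.toReal_nonneg

lemma absCdf_le_one (x : ℝ) : absCdf π x ≤ 1 := by
  have h := prob_le_one (μ := π) (s := Icc (-x) x)
  simpa [absCdf] using ENNReal.toReal_mono ENNReal.one_ne_top h

lemma absCdf_mono : Monotone (absCdf π) := fun x y hxy =>
  ENNReal.toReal_mono (measure_ne_top π _)
    (measure_mono (Icc_subset_Icc (neg_le_neg hxy) hxy))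

lemma tail_eq (x : ℝ) : (π (Icc (-x) x)ᶜ).toReal = 1 - absCdf π x := by
  rw [measure_compl measurableSet_Icc (measure_ne_top π _), measure_univ,
    ENNReal.toReal_sub_of_le prob_le_one ENNReal.one_ne_top]
  simp [absCdf]

lemma absCdf_right {s t : ℝ} (h : absCdf π s < t) : ∃ s' > s, absCdf π s' < t := by
  have hanti : Antitone (fun n : ℕ => Icc (-(s + 1/(n+1))) (s + 1/(n+1))) := by
    intro m n hmn
    have hc : (m:ℝ) ≤ n := Nat.cast_le.2 hmn
    have h1 : (1 : ℝ)/(n+1) ≤ 1/(m+1) := by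
      apply one_div_le_one_div_of_le <;> linarith
    exact Icc_subset_Icc (by linarith) (by linarith)
  have hinter : (⋂ n : ℕ, Icc (-(s + 1/(n+1))) (s + 1/(n+1))) = Icc (-s) s := by
    ext x
    simp only [mem_iInter, mem_Icc]
    constructor
    · intro hx
      constructor
      · have : -s ≤ x + 1 * 1 := by nlinarith [(hx 0).1]
        refine le_of_forall_pos_le_add ?_
        intro ε hε
        obtain ⟨n, hn⟩ := exists_nat_one_div_lt hε
        have := (hx n).1
        push_cast at this ⊢
        linarith
      · refine le_of_forall_pos_le_add ?_
        intro ε hε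
        obtain ⟨n, hn⟩ := exists_nat_one_div_lt hε
        have := (hx n).2
        push_cast at this ⊢
        linarith
    · intro hx n
      have hpos : (0:ℝ) < 1/(n+1) := by positivity
      constructor <;> [linarith [hx.1]; linarith [hx.2]]
  have htend : Tendsto (fun n : ℕ => absCdf π (s + 1/(n+1))) atTop (nhds (absCdf π s)) := by
    have h1 := tendsto_measure_iInter_atTop (μ := π)
      (s := fun n : ℕ => Icc (-(s + 1/(n+1))) (s + 1/(n+1)))
      (fun n => measurableSet_Icc.nullMeasurableSet)
      hanti ⟨0, measure_ne_top π _⟩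
    rw [hinter] at h1
    exact (ENNReal.tendsto_toReal (measure_ne_top π _)).comp h1
  have := (htend.eventually (eventually_lt_nhds h)).exists
  obtain ⟨n, hn⟩ := this
  have hpos : (0:ℝ) < 1/(n+1) := by positivity
  exact ⟨s + 1/(n+1), by linarith, hn⟩


lemma mem_qs_nonneg {t x : ℝ} (ht : 0 ≤ t) (h : absCdf π x > t) : 0 ≤ x := by
  by_contra hx
  push_neg at hx
  rw [absCdf, Icc_eq_empty (by intro hc; linarith [neg_nonpos_of_nonneg (le_of_lt (neg_pos.2 hx))] : ¬ (-x ≤ x))] at h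
  simp at h
  linarith

lemma quantile_nonneg {t : ℝ} (ht : 0 ≤ t) : 0 ≤ absQuantile π t :=
  Real.sInf_nonneg (fun _ hx => mem_qs_nonneg π ht hx)

lemma quantile_le {t x : ℝ} (ht : 0 ≤ t) (h : t < absCdf π x) : absQuantile π t ≤ x :=
  csInf_le ⟨0, fun _ hy => mem_qs_nonneg π ht hy⟩ h

lemma qs_nonempty (hA : Tendsto (absCdf π) atTop (nhds 1)) {t : ℝ} (ht : t < 1) :
    {x : ℝ | absCdf π x > t}.Nonempty :=
  (hA.eventually (eventually_gt_nhds ht)).exists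

lemma le_quantile (hA : Tendsto (absCdf π) atTop (nhds 1)) {t y : ℝ} (ht : t < 1)
    (h : ∀ x, t < absCdf π x → y ≤ x) : y ≤ absQuantile π t :=
  le_csInf (qs_nonempty π hA ht) h

lemma lt_quantile (hA : Tendsto (absCdf π) atTop (nhds 1)) {s t : ℝ} (ht1 : t < 1)
    (h : absCdf π s < t) : s < absQuantile π t := by
  obtain ⟨s', hs', hs't⟩ := absCdf_right π h
  have hle : s' ≤ absQuantile π t := by
    apply le_quantile π hA ht1
    intro x hx
    by_contra hxs
    push_neg at hxs
    exact absurd (lt_of_lt_of_le hx (absCdf_mono π hxs.le)) (by linarith)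
  linarith

lemma quantile_monoOn (hA : Tendsto (absCdf π) atTop (nhds 1)) :
    MonotoneOn (absQuantile π) (Ioo (0:ℝ) 1) := by
  intro a ha b hb hab
  apply le_csInf (qs_nonempty π hA hb.2)
  intro x hx
  exact csInf_le ⟨0, fun _ hy => mem_qs_nonneg π ha.1.le hy⟩ (lt_of_le_of_lt hab hx)

lemma meas_quantile_gt (hA : Tendsto (absCdf π) atTop (nhds 1)) {s : ℝ} :
    (volume.restrict (Ioo (0:ℝ) 1)) {t : ℝ | s < absQuantile π t}
      = ENNReal.ofReal (1 - absCdf π s) := by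
  rw [Measure.restrict_apply' measurableSet_Ioo]
  apply le_antisymm
  · have hsub : {t : ℝ | s < absQuantile π t} ∩ Ioo 0 1 ⊆ Icc (absCdf π s) 1 := by
      rintro t ⟨ht, ht0, ht1⟩
      refine ⟨?_, ht1.le⟩
      by_contra hlt
      push_neg at hlt
      exact absurd (quantile_le π ht0.le hlt) (not_le.2 ht)
    calc volume ({t : ℝ | s < absQuantile π t} ∩ Ioo 0 1)
        ≤ volume (Icc (absCdf π s) 1) := measure_mono hsub
      _ = ENNReal.ofReal (1 - absCdf π s) := Real.volume_Icc
  · have hsub : Ioo (absCdf π s) 1 ⊆ {t : ℝ | s < absQuantile π t} ∩ Ioo 0 1 := by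
      rintro t ⟨h1, h2⟩
      have ht0 : 0 < t := lt_of_le_of_lt (absCdf_nonneg π s) h1
      exact ⟨lt_quantile π hA h2 h1, ht0, h2⟩
    calc ENNReal.ofReal (1 - absCdf π s) = volume (Ioo (absCdf π s) 1) := Real.volume_Ioo.symm
      _ ≤ _ := measure_mono hsub

lemma meas_abs_gt {s : ℝ} :
    π {x : ℝ | s < |x|} = ENNReal.ofReal (1 - absCdf π s) := by
  have hset : {x : ℝ | s < |x|} = (Icc (-s) s)ᶜ := by
    ext x
    simp only [mem_setOf_eq, mem_compl_iff, mem_Icc, ← abs_le, not_le]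
  rw [hset, ← ENNReal.ofReal_toReal (measure_ne_top π ((Icc (-s) s)ᶜ)), tail_eq π s]

lemma lint_quantile_eq (hA : Tendsto (absCdf π) atTop (nhds 1)) :
    ∫⁻ t in Ioo (0:ℝ) 1, ENNReal.ofReal (absQuantile π t)
      = ∫⁻ x, ENNReal.ofReal |x| ∂π := by
  have hQm : AEMeasurable (absQuantile π) (volume.restrict (Ioo (0:ℝ) 1)) :=
    aemeasurable_restrict_of_monotoneOn measurableSet_Ioo (quantile_monoOn π hA)
  have hQnn : 0 ≤ᵐ[volume.restrict (Ioo (0:ℝ) 1)] absQuantile π :=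
    (ae_restrict_iff' measurableSet_Ioo).2 (ae_of_all _ fun t ht => quantile_nonneg π ht.1.le)
  rw [lintegral_eq_lintegral_meas_lt _ hQnn hQm,
    lintegral_eq_lintegral_meas_lt π (ae_of_all _ fun x => abs_nonneg x)
      measurable_abs.aemeasurable]
  refine setLIntegral_congr_fun measurableSet_Ioi (fun s _ => ?_)
  rw [meas_quantile_gt π hA, meas_abs_gt π]

lemma lint_lt_top (hint : Integrable (fun x : ℝ => |x|) π) :
    ∫⁻ x, ENNReal.ofReal |x| ∂π < ⊤ := by
  have h := (hasFiniteIntegral_iff_ofReal (ae_of_all _ fun x : ℝ => abs_nonneg x)).1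
    hint.hasFiniteIntegral
  simpa using h

lemma quantile_integrableOn (hA : Tendsto (absCdf π) atTop (nhds 1))
    (hint : Integrable (fun x : ℝ => |x|) π) :
    IntegrableOn (absQuantile π) (Ioo (0:ℝ) 1) := by
  have hQm : AEMeasurable (absQuantile π) (volume.restrict (Ioo (0:ℝ) 1)) :=
    aemeasurable_restrict_of_monotoneOn measurableSet_Ioo (quantile_monoOn π hA)
  have hQnn : 0 ≤ᵐ[volume.restrict (Ioo (0:ℝ) 1)] absQuantile π :=
    (ae_restrict_iff' measurableSet_Ioo).2 (ae_of_all _ fun t ht => quantile_nonneg π ht.1.le)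
  refine ⟨hQm.aestronglyMeasurable, ?_⟩
  rw [hasFiniteIntegral_iff_ofReal hQnn]
  rw [show ∫⁻ t, ENNReal.ofReal (absQuantile π t) ∂(volume.restrict (Ioo (0:ℝ) 1))
      = ∫⁻ t in Ioo (0:ℝ) 1, ENNReal.ofReal (absQuantile π t) from rfl,
    lint_quantile_eq π hA]
  exact lint_lt_top π hint

lemma quantile_integral_eq (hA : Tendsto (absCdf π) atTop (nhds 1))
    (hint : Integrable (fun x : ℝ => |x|) π) :
    ∫ t in Ioo (0:ℝ) 1, absQuantile π t = ∫ x, |x| ∂π := by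
  have hQm : AEMeasurable (absQuantile π) (volume.restrict (Ioo (0:ℝ) 1)) :=
    aemeasurable_restrict_of_monotoneOn measurableSet_Ioo (quantile_monoOn π hA)
  have hQnn : 0 ≤ᵐ[volume.restrict (Ioo (0:ℝ) 1)] absQuantile π :=
    (ae_restrict_iff' measurableSet_Ioo).2 (ae_of_all _ fun t ht => quantile_nonneg π ht.1.le)
  rw [integral_eq_lintegral_of_nonneg_ae hQnn hQm.aestronglyMeasurable,
    integral_eq_lintegral_of_nonneg_ae (ae_of_all _ fun x : ℝ => abs_nonneg x)
      measurable_abs.aestronglyMeasurable,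
    lint_quantile_eq π hA]


lemma mean_pos (hint : Integrable (fun x : ℝ => |x|) π) {x₁ : ℝ} (hx : 0 < x₁)
    (hT : absCdf π x₁ < 1) : 0 < ∫ x, |x| ∂π := by
  set S := (Icc (-x₁) x₁)ᶜ with hSdef
  have hSm : MeasurableSet S := measurableSet_Icc.compl
  have hS : 0 < (π S).toReal := by rw [hSdef, tail_eq]; linarith
  have habs : ∀ x ∈ S, x₁ ≤ |x| := by
    intro x hxS
    simp only [hSdef, mem_compl_iff, mem_Icc, not_and_or, not_le] at hxS
    rcases hxS with h | h
    · rw [abs_of_nonpos (by linarith)]; linarith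
    · rw [abs_of_pos (by linarith)]; linarith
  have h1 : x₁ * (π S).toReal ≤ ∫ x in S, |x| ∂π :=
    setIntegral_ge_of_const_le_real hSm (measure_ne_top π _) habs hint.integrableOn
  have h2 : ∫ x in S, |x| ∂π ≤ ∫ x, |x| ∂π :=
    setIntegral_le_integral hint (ae_of_all _ fun x => abs_nonneg x)
  nlinarith

lemma tail_tendsto {α cm cp : ℝ} (hα : 0 < α)
    (hm : Tendsto (fun x : ℝ => x ^ α * (π (Iic (-x))).toReal) atTop (nhds cm))
    (hp : Tendsto (fun x : ℝ => x ^ α * (π (Ioi x)).toReal) atTop (nhds cp)) :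
    Tendsto (fun x : ℝ => x ^ α * (1 - absCdf π x)) atTop (nhds (cm + cp)) := by
  have hsplit : ∀ x : ℝ, 0 ≤ x →
      1 - absCdf π x = (π (Iio (-x))).toReal + (π (Ioi x)).toReal := by
    intro x hx
    rw [← tail_eq]
    have hcompl : (Icc (-x) x)ᶜ = Iio (-x) ∪ Ioi x := by
      ext y
      simp only [mem_compl_iff, mem_Icc, not_and_or, not_le, mem_union, mem_Iio, mem_Ioi]
    rw [hcompl, measure_union ((Iio_disjoint_Ici (by linarith : -x ≤ x)).mono_right Ioi_subset_Ici_self) measurableSet_Ioi,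
      ENNReal.toReal_add (measure_ne_top _ _) (measure_ne_top _ _)]
  -- lower squeeze function tends to cm
  have hshift : Tendsto (fun x : ℝ => (x+1) ^ α * (π (Iic (-(x+1)))).toReal) atTop (nhds cm) :=
    hm.comp (tendsto_atTop_add_const_right atTop 1 tendsto_id)
  have hratio : Tendsto (fun x : ℝ => (x/(x+1)) ^ α) atTop (nhds 1) := by
    have h1 : Tendsto (fun x : ℝ => x/(x+1)) atTop (nhds 1) := by
      have hinv : Tendsto (fun x : ℝ => (x+1)⁻¹) atTop (nhds 0) :=
        (tendsto_atTop_add_const_right atTop 1 tendsto_id).inv_tendsto_atTop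
      have hone : Tendsto (fun _ : ℝ => (1:ℝ)) atTop (nhds 1) := tendsto_const_nhds
      have := hone.sub hinv
      rw [sub_zero] at this
      apply this.congr'
      filter_upwards [eventually_gt_atTop (0:ℝ)] with x hx
      have : x + 1 ≠ 0 := by linarith
      field_simp
      ring
    have h2 : ContinuousAt (fun y : ℝ => y ^ α) 1 :=
      (Real.continuousAt_rpow_const 1 α (Or.inl one_ne_zero))
    have := h2.tendsto.comp h1
    rw [Real.one_rpow] at this
    exact this
  have hlow : Tendsto (fun x : ℝ => x ^ α * (π (Iic (-(x+1)))).toReal) atTop (nhds cm) := by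
    have hmul := hratio.mul hshift
    rw [one_mul] at hmul
    apply hmul.congr'
    filter_upwards [eventually_gt_atTop (0:ℝ)] with x hx
    have hx1 : (0:ℝ) < x + 1 := by linarith
    rw [Real.div_rpow hx.le hx1.le]
    field_simp
  have hIio : Tendsto (fun x : ℝ => x ^ α * (π (Iio (-x))).toReal) atTop (nhds cm) := by
    apply tendsto_of_tendsto_of_tendsto_of_le_of_le' hlow hm
    · filter_upwards [eventually_ge_atTop (0:ℝ)] with x hx
      apply mul_le_mul_of_nonneg_left _ (Real.rpow_nonneg hx α)
      exact ENNReal.toReal_mono (measure_ne_top _ _)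
        (measure_mono (Iic_subset_Iio.2 (by linarith)))
    · filter_upwards [eventually_ge_atTop (0:ℝ)] with x hx
      apply mul_le_mul_of_nonneg_left _ (Real.rpow_nonneg hx α)
      exact ENNReal.toReal_mono (measure_ne_top _ _) (measure_mono Iio_subset_Iic_self)
  have := hIio.add hp
  apply this.congr'
  filter_upwards [eventually_ge_atTop (0:ℝ)] with x hx
  rw [hsplit x hx]
  ring


lemma absCdf_tendsto_one {α c : ℝ} (hα : 0 < α)
    (h : Tendsto (fun x : ℝ => x ^ α * (1 - absCdf π x)) atTop (nhds c)) :
    Tendsto (absCdf π) atTop (nhds 1) := by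
  have h0 : Tendsto (fun x : ℝ => x ^ (-α) * (x ^ α * (1 - absCdf π x))) atTop (nhds (0 * c)) :=
    (tendsto_rpow_neg_atTop hα).mul h
  rw [zero_mul] at h0
  have hT : Tendsto (fun x : ℝ => 1 - absCdf π x) atTop (nhds 0) := by
    apply h0.congr'
    filter_upwards [eventually_gt_atTop (0:ℝ)] with x hx
    rw [← mul_assoc, ← Real.rpow_add hx, neg_add_cancel, Real.rpow_zero, one_mul]
  have hone : Tendsto (fun _ : ℝ => (1:ℝ)) atTop (nhds 1) := tendsto_const_nhds
  have := hone.sub hT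
  rw [sub_zero] at this
  apply this.congr
  intro x
  ring

lemma tail_bounds {α c : ℝ} (hα : 0 < α) (hc : 0 < c)
    (h : Tendsto (fun x : ℝ => x ^ α * (1 - absCdf π x)) atTop (nhds c)) :
    ∃ x₀ : ℝ, 1 ≤ x₀ ∧ ∀ x ≥ x₀,
      c/2 * x ^ (-α) ≤ 1 - absCdf π x ∧ 1 - absCdf π x ≤ 2*c * x ^ (-α) := by
  have h1 : ∀ᶠ x : ℝ in atTop, c/2 < x ^ α * (1 - absCdf π x) :=
    h.eventually (eventually_gt_nhds (by linarith))
  have h2 : ∀ᶠ x : ℝ in atTop, x ^ α * (1 - absCdf π x) < 2*c :=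
    h.eventually (eventually_lt_nhds (by linarith))
  obtain ⟨x₀, hx₀⟩ := (h1.and (h2.and (eventually_ge_atTop (1:ℝ)))).exists_forall_of_atTop
  refine ⟨max x₀ 1, le_max_right _ _, fun x hx => ?_⟩
  obtain ⟨hb1, hb2, _⟩ := hx₀ x (le_trans (le_max_left _ _) hx)
  have hx1 : (1:ℝ) ≤ x := le_trans (le_max_right _ _) hx
  have hxpos : (0:ℝ) < x := by linarith
  have hpow : (0:ℝ) < x ^ α := Real.rpow_pos_of_pos hxpos α
  have hrev : x ^ (-α) = (x ^ α)⁻¹ := Real.rpow_neg hxpos.le α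
  constructor
  · rw [hrev]
    rw [ge_iff_le, ← sub_nonneg] at *
    have := mul_pos hpow hpow
    nlinarith [mul_le_mul_of_nonneg_left hb1.le (inv_nonneg.2 hpow.le),
      inv_mul_cancel₀ hpow.ne']
  · rw [hrev]
    nlinarith [mul_le_mul_of_nonneg_left hb2.le (inv_nonneg.2 hpow.le),
      inv_mul_cancel₀ hpow.ne']

lemma quantile_upper (hA : Tendsto (absCdf π) atTop (nhds 1)) {b α x₀ : ℝ}
    (hb : 0 < b) (hα : 0 < α) (hx₀ : 1 ≤ x₀)
    (h : ∀ x ≥ x₀, 1 - absCdf π x ≤ b * x ^ (-α)) :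
    ∃ t₀ ∈ Ico (1/2 : ℝ) 1, ∀ t ∈ Ioo t₀ 1,
      absQuantile π t ≤ (2*b) ^ α⁻¹ * (1-t) ^ (-α⁻¹) := by
  have hx₀pos : (0:ℝ) < x₀ := by linarith
  have hpow₀ : (0:ℝ) < x₀ ^ α := Real.rpow_pos_of_pos hx₀pos α
  set t₀ : ℝ := max (1/2) (1 - 2*b*(x₀ ^ α)⁻¹) with ht₀def
  have ht₀1 : t₀ < 1 := by
    apply max_lt (by norm_num)
    have : 0 < 2*b*(x₀ ^ α)⁻¹ := by positivity
    linarith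
  refine ⟨t₀, ⟨le_max_left _ _, ht₀1⟩, fun t ⟨ht1, ht2⟩ => ?_⟩
  have htpos : (0:ℝ) < t := lt_of_lt_of_le (lt_of_lt_of_le (by norm_num) (le_max_left _ _)) ht1.le
  have h1t : (0:ℝ) < 1 - t := by linarith
  set x : ℝ := (2*b/(1-t)) ^ α⁻¹ with hxdef
  have hbase : (0:ℝ) < 2*b/(1-t) := by positivity
  have hxpos : (0:ℝ) < x := Real.rpow_pos_of_pos hbase α⁻¹
  have hxge : x₀ ≤ x := by
    have hlt : 1 - 2*b*(x₀ ^ α)⁻¹ < t := lt_of_le_of_lt (le_max_right _ _) ht1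
    have hineq : x₀ ^ α ≤ 2*b/(1-t) := by
      rw [le_div_iff₀ h1t]
      have h2 : (1 - t) * x₀ ^ α < 2*b*(x₀ ^ α)⁻¹ * x₀ ^ α := by
        apply mul_lt_mul_of_pos_right _ hpow₀
        linarith
      rw [mul_assoc, inv_mul_cancel₀ hpow₀.ne', mul_one] at h2
      linarith [h2]
    calc x₀ = (x₀ ^ α) ^ α⁻¹ := by
          rw [← Real.rpow_mul hx₀pos.le, mul_inv_cancel₀ hα.ne', Real.rpow_one]
      _ ≤ x := Real.rpow_le_rpow hpow₀.le hineq (by positivity)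
  have hAx : t < absCdf π x := by
    have hTb := h x (hxge)
    have hxinv : x ^ (-α) = (1-t)/(2*b) := by
      rw [hxdef, ← Real.rpow_mul hbase.le]
      have : α⁻¹ * (-α) = -1 := by field_simp
      rw [this, Real.rpow_neg_one, inv_div]
    rw [hxinv] at hTb
    have : b * ((1-t)/(2*b)) = (1-t)/2 := by field_simp
    rw [this] at hTb
    linarith
  have hQ := quantile_le π htpos.le hAx
  have hxval : x = (2*b) ^ α⁻¹ * (1-t) ^ (-α⁻¹) := by
    rw [hxdef, Real.div_rpow (by positivity) h1t.le, Real.rpow_neg h1t.le, div_eq_mul_inv]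
  rw [← hxval]
  exact hQ

lemma quantile_lower (hA : Tendsto (absCdf π) atTop (nhds 1)) {a α x₁ : ℝ}
    (ha : 0 < a) (hα : 0 < α) (hx₁ : 1 ≤ x₁)
    (h : ∀ x ≥ x₁, a * x ^ (-α) ≤ 1 - absCdf π x) :
    ∃ t₁ ∈ Ico (1/2 : ℝ) 1, ∀ t ∈ Ioo t₁ 1,
      a ^ α⁻¹ * (1-t) ^ (-α⁻¹) ≤ absQuantile π t := by
  have hx₁pos : (0:ℝ) < x₁ := by linarith
  have hAx₁ : absCdf π x₁ < 1 := by
    have := h x₁ le_rfl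
    have hp : (0:ℝ) < a * x₁ ^ (-α) := by positivity
    linarith
  set t₁ : ℝ := max (1/2) (absCdf π x₁) with ht₁def
  refine ⟨t₁, ⟨le_max_left _ _, max_lt (by norm_num) hAx₁⟩, fun t ⟨ht1, ht2⟩ => ?_⟩
  have h1t : (0:ℝ) < 1 - t := by linarith
  apply le_quantile π hA ht2
  intro x hx
  have hxx₁ : x₁ < x := by
    by_contra hle
    push_neg at hle
    have := absCdf_mono π hle
    have := lt_of_le_of_lt (le_max_right (1/2:ℝ) _) ht1
    linarith
  have hxpos : (0:ℝ) < x := by linarith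
  have hT := h x hxx₁.le
  have hTt : a * x ^ (-α) < 1 - t := by linarith
  have hrev : x ^ (-α) = (x ^ α)⁻¹ := Real.rpow_neg hxpos.le α
  have hpow : (0:ℝ) < x ^ α := Real.rpow_pos_of_pos hxpos α
  have hineq : a/(1-t) ≤ x ^ α := by
    rw [div_le_iff₀ h1t]
    rw [hrev] at hTt
    have h2 : a * (x ^ α)⁻¹ * x ^ α < (1-t) * x ^ α := mul_lt_mul_of_pos_right hTt hpow
    rw [mul_assoc, inv_mul_cancel₀ hpow.ne', mul_one] at h2
    linarith [h2]
  have : (a/(1-t)) ^ α⁻¹ ≤ x := by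
    calc (a/(1-t)) ^ α⁻¹ ≤ (x ^ α) ^ α⁻¹ := Real.rpow_le_rpow (by positivity) hineq (by positivity)
      _ = x := by rw [← Real.rpow_mul hxpos.le, mul_inv_cancel₀ hα.ne', Real.rpow_one]
  calc a ^ α⁻¹ * (1-t) ^ (-α⁻¹) = (a/(1-t)) ^ α⁻¹ := by
        rw [Real.div_rpow ha.le h1t.le, Real.rpow_neg h1t.le, div_eq_mul_inv]
    _ ≤ x := this

end WPL

open WPL


set_option maxHeartbeats 1000000 in
/-- comparison of concentration of two weak Pareto laws with
exponents `1 < α₁ < α₂ < 2`: eventually (near `θ = 1`) the Lorenz curve of the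
heavier-tailed one lies below the other one. -/
theorem weakPareto_lorenz_comparison
    (π₁ π₂ : Measure ℝ) [IsProbabilityMeasure π₁] [IsProbabilityMeasure π₂]
    (α₁ α₂ c₁m c₁p c₂m c₂p : ℝ)
    (hα₁ : 1 < α₁) (hα₁₂ : α₁ < α₂) (hα₂ : α₂ < 2)
    (h1m : Tendsto (fun x : ℝ => x ^ α₁ * (π₁ (Iic (-x))).toReal) atTop (nhds c₁m))
    (h1p : Tendsto (fun x : ℝ => x ^ α₁ * (π₁ (Ioi x)).toReal) atTop (nhds c₁p))
    (h2m : Tendsto (fun x : ℝ => x ^ α₂ * (π₂ (Iic (-x))).toReal) atTop (nhds c₂m))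
    (h2p : Tendsto (fun x : ℝ => x ^ α₂ * (π₂ (Ioi x)).toReal) atTop (nhds c₂p))
    (hc₁ : 0 < c₁m + c₁p) (hc₂ : 0 < c₂m + c₂p)
    (hint₁ : Integrable (fun x : ℝ => |x|) π₁)
    (hint₂ : Integrable (fun x : ℝ => |x|) π₂) :
    ∃ θbar ∈ Ioo (0 : ℝ) 1, ∀ θ ∈ Ioo θbar 1, lorenzFn π₁ θ ≤ lorenzFn π₂ θ := by
  have hα₁0 : (0:ℝ) < α₁ := by linarith
  have hα₂0 : (0:ℝ) < α₂ := by linarith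
  -- tail asymptotics
  have hTT₁ := tail_tendsto π₁ hα₁0 h1m h1p
  have hTT₂ := tail_tendsto π₂ hα₂0 h2m h2p
  have hA₁ := absCdf_tendsto_one π₁ hα₁0 hTT₁
  have hA₂ := absCdf_tendsto_one π₂ hα₂0 hTT₂
  obtain ⟨x₁, hx₁ge, hb₁⟩ := tail_bounds π₁ hα₁0 hc₁ hTT₁
  obtain ⟨x₂, hx₂ge, hb₂⟩ := tail_bounds π₂ hα₂0 hc₂ hTT₂
  -- mean positivity
  have hM₁ : 0 < ∫ x, |x| ∂π₁ := by
    apply mean_pos π₁ hint₁ (show (0:ℝ) < x₁ by linarith)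
    have := (hb₁ x₁ le_rfl).1
    have hp : (0:ℝ) < (c₁m + c₁p)/2 * x₁ ^ (-α₁) :=
      mul_pos (by linarith) (Real.rpow_pos_of_pos (by linarith) _)
    linarith
  have hM₂ : 0 < ∫ x, |x| ∂π₂ := by
    apply mean_pos π₂ hint₂ (show (0:ℝ) < x₂ by linarith)
    have := (hb₂ x₂ le_rfl).1
    have hp : (0:ℝ) < (c₂m + c₂p)/2 * x₂ ^ (-α₂) :=
      mul_pos (by linarith) (Real.rpow_pos_of_pos (by linarith) _)
    linarith
  set M₁ : ℝ := ∫ x, |x| ∂π₁ with hM₁def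
  set M₂ : ℝ := ∫ x, |x| ∂π₂ with hM₂def
  -- quantile bounds
  obtain ⟨t₁, ht₁mem, hQ₁⟩ := quantile_lower π₁ hA₁ (show (0:ℝ) < (c₁m + c₁p)/2 by linarith)
    hα₁0 hx₁ge (fun x hx => (hb₁ x hx).1)
  obtain ⟨t₂, ht₂mem, hQ₂⟩ := quantile_upper π₂ hA₂ (show (0:ℝ) < 2*(c₂m + c₂p) by linarith)
    hα₂0 hx₂ge (fun x hx => by
      have := (hb₂ x hx).2
      linarith)
  set K₁ : ℝ := ((c₁m + c₁p)/2) ^ α₁⁻¹ with hK₁def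
  set K₂ : ℝ := (2*(2*(c₂m + c₂p))) ^ α₂⁻¹ with hK₂def
  have hK₁pos : 0 < K₁ := Real.rpow_pos_of_pos (by linarith) _
  have hK₂pos : 0 < K₂ := Real.rpow_pos_of_pos (by linarith) _
  set ε : ℝ := α₁⁻¹ - α₂⁻¹ with hεdef
  have hεpos : 0 < ε := by
    have : α₂⁻¹ < α₁⁻¹ := by
      apply one_div_lt_one_div_of_lt hα₁0 hα₁₂ |>.trans_eq ?_ |>.trans_eq' ?_ <;> simp [one_div]
    simpa [hεdef, sub_pos] using this
  set R : ℝ := K₁ * M₂ / (K₂ * M₁) with hRdef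
  have hRpos : 0 < R := by positivity
  set sR : ℝ := min (R ^ ε⁻¹) 1 with hsRdef
  have hsRpos : 0 < sR := lt_min (Real.rpow_pos_of_pos hRpos _) one_pos
  set t₃ : ℝ := 1 - sR/2 with ht₃def
  set θbar : ℝ := max (max t₁ t₂) t₃ with hθdef
  have hθ0 : (1/2 : ℝ) ≤ θbar := le_trans ht₁mem.1 (le_trans (le_max_left _ _) (le_max_left _ _))
  have hθlt1 : θbar < 1 := by
    apply max_lt (max_lt ht₁mem.2 ht₂mem.2)
    rw [ht₃def]
    linarith
  -- key pointwise comparison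
  have key : ∀ t ∈ Ioo θbar 1, M₂⁻¹ * absQuantile π₂ t ≤ M₁⁻¹ * absQuantile π₁ t := by
    rintro t ⟨htl, htu⟩
    have ht₁' : t ∈ Ioo t₁ 1 :=
      ⟨lt_of_le_of_lt (le_trans (le_max_left _ _) (le_max_left _ _)) htl, htu⟩
    have ht₂' : t ∈ Ioo t₂ 1 :=
      ⟨lt_of_le_of_lt (le_trans (le_max_right _ _) (le_max_left _ _)) htl, htu⟩
    have h1t : (0:ℝ) < 1 - t := by linarith
    have hts : 1 - t < sR/2 := by
      have : t₃ < t := lt_of_le_of_lt (le_max_right _ _) htl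
      rw [ht₃def] at this
      linarith
    set P : ℝ := (1-t) ^ (-α₁⁻¹) with hPdef
    have hPpos : 0 < P := Real.rpow_pos_of_pos h1t _
    have hsplit : (1-t) ^ (-α₂⁻¹) = (1-t) ^ ε * P := by
      rw [hPdef, ← Real.rpow_add h1t]
      congr 1
      rw [hεdef]
      ring
    have heps : (1-t) ^ ε ≤ R := by
      have h1 : 1 - t ≤ R ^ ε⁻¹ := by
        have : sR ≤ R ^ ε⁻¹ := min_le_left _ _
        linarith
      calc (1-t) ^ ε ≤ (R ^ ε⁻¹) ^ ε := Real.rpow_le_rpow h1t.le h1 hεpos.le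
        _ = R := by rw [← Real.rpow_mul hRpos.le, inv_mul_cancel₀ hεpos.ne', Real.rpow_one]
    have hq2 := hQ₂ t ht₂'
    have hq1 := hQ₁ t ht₁'
    have hQ₂nn : 0 ≤ absQuantile π₂ t := quantile_nonneg π₂ (by linarith)
    calc M₂⁻¹ * absQuantile π₂ t ≤ M₂⁻¹ * (K₂ * ((1-t) ^ ε * P)) := by
          apply mul_le_mul_of_nonneg_left _ (by positivity)
          rw [← hsplit]; exact hq2
      _ ≤ M₂⁻¹ * (K₂ * (R * P)) := by
          apply mul_le_mul_of_nonneg_left _ (by positivity)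
          apply mul_le_mul_of_nonneg_left _ hK₂pos.le
          exact mul_le_mul_of_nonneg_right heps hPpos.le
      _ = M₁⁻¹ * (K₁ * P) := by
          rw [hRdef]
          field_simp
      _ ≤ M₁⁻¹ * absQuantile π₁ t := by
          apply mul_le_mul_of_nonneg_left hq1 (by positivity)
  refine ⟨θbar, ⟨by linarith, hθlt1⟩, fun θ ⟨hθl, hθu⟩ => ?_⟩
  have hθpos : (0:ℝ) < θ := by linarith
  -- integrability pieces
  have hint₁' := quantile_integrableOn π₁ hA₁ hint₁
  have hint₂' := quantile_integrableOn π₂ hA₂ hint₂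
  have hsub : Ioo θ 1 ⊆ Ioo (0:ℝ) 1 := Ioo_subset_Ioo hθpos.le le_rfl
  have hsub' : Ioc (0:ℝ) θ ⊆ Ioo (0:ℝ) 1 := fun x hx => ⟨hx.1, lt_of_le_of_lt hx.2 hθu⟩
  have hIθ₁ : IntegrableOn (absQuantile π₁) (Ioo θ 1) := hint₁'.mono_set hsub
  have hIθ₂ : IntegrableOn (absQuantile π₂) (Ioo θ 1) := hint₂'.mono_set hsub
  have hIc₁ : IntegrableOn (absQuantile π₁) (Ioc 0 θ) := hint₁'.mono_set hsub'
  have hIc₂ : IntegrableOn (absQuantile π₂) (Ioc 0 θ) := hint₂'.mono_set hsub'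
  have hdisj : Disjoint (Ioc (0:ℝ) θ) (Ioo θ 1) :=
    Set.disjoint_left.2 fun x hx hx' => absurd hx.2 (not_le.2 hx'.1)
  have hunion : Ioc (0:ℝ) θ ∪ Ioo θ 1 = Ioo (0:ℝ) 1 := Ioc_union_Ioo_eq_Ioo hθpos.le hθu
  have hsplit₁ : ∫ t in Ioo (0:ℝ) 1, absQuantile π₁ t
      = (∫ t in Ioc (0:ℝ) θ, absQuantile π₁ t) + ∫ t in Ioo θ 1, absQuantile π₁ t := by
    rw [← hunion, setIntegral_union hdisj measurableSet_Ioo hIc₁ hIθ₁]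
  have hsplit₂ : ∫ t in Ioo (0:ℝ) 1, absQuantile π₂ t
      = (∫ t in Ioc (0:ℝ) θ, absQuantile π₂ t) + ∫ t in Ioo θ 1, absQuantile π₂ t := by
    rw [← hunion, setIntegral_union hdisj measurableSet_Ioo hIc₂ hIθ₂]
  have hmean₁ := quantile_integral_eq π₁ hA₁ hint₁
  have hmean₂ := quantile_integral_eq π₂ hA₂ hint₂
  set I₁ : ℝ := ∫ t in Ioo θ 1, absQuantile π₁ t with hI₁def
  set I₂ : ℝ := ∫ t in Ioo θ 1, absQuantile π₂ t with hI₂def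
  have hIcomp : M₂⁻¹ * I₂ ≤ M₁⁻¹ * I₁ := by
    rw [hI₁def, hI₂def, ← MeasureTheory.integral_const_mul, ← MeasureTheory.integral_const_mul]
    apply setIntegral_mono_on (hIθ₂.const_mul _) (hIθ₁.const_mul _) measurableSet_Ioo
    intro t ht
    exact key t ⟨lt_trans hθl ht.1, ht.2⟩
  have hIoc₁ : ∫ t in Ioc (0:ℝ) θ, absQuantile π₁ t = M₁ - I₁ := by
    rw [hM₁def, ← hmean₁, hsplit₁]; ring
  have hIoc₂ : ∫ t in Ioc (0:ℝ) θ, absQuantile π₂ t = M₂ - I₂ := by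
    rw [hM₂def, ← hmean₂, hsplit₂]; ring
  have hl₁ : lorenzFn π₁ θ = 1 - M₁⁻¹ * I₁ := by
    rw [lorenzFn, intervalIntegral.integral_of_le hθpos.le, hIoc₁, ← hM₁def,
      mul_sub, inv_mul_cancel₀ hM₁.ne']
  have hl₂ : lorenzFn π₂ θ = 1 - M₂⁻¹ * I₂ := by
    rw [lorenzFn, intervalIntegral.integral_of_le hθpos.le, hIoc₂, ← hM₂def,
      mul_sub, inv_mul_cancel₀ hM₂.ne']
  rw [hl₁, hl₂]
  linarith
end

section
/- Let μ be a weak Pareto probability measure of exponent α ∈ (0,1], i.e. x^α μ((-∞,-x]) → c₁ and x^α μ((x,∞)) → c₂ with c₁ + c₂ > 0, and assume the total tail limit c = c₁ + c₂ satisfies c > 0. For ω > 0 with μ((-ω,ω)) > 0, let A^{(ω)}(x) = A_μ(min(x,ω))/A_μ(ω) be the cdf of |X| conditioned to [0,ω), and let φ^{(ω)} be its Lorenz concentration function. Then for every θ ∈ (0,1), φ^{(ω)}(θ) → 0 as ω → +∞. -/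
open MeasureTheory Set Filter

/-- Cdf of the absolute value: `A_μ(x) = μ([-x,x])`. -/
noncomputable def absCdf' (μ : Measure ℝ) (x : ℝ) : ℝ := (μ (Icc (-x) x)).toReal

/-- Cdf of `|X|` conditioned to `[0,ω)`: `A^(ω)(x) = A_μ(min(x,ω))/A_μ(ω)`. -/
noncomputable def condAbsCdf (μ : Measure ℝ) (ω x : ℝ) : ℝ :=
  absCdf' μ (min x ω) / absCdf' μ ω

/-- Lorenz concentration function of the conditioned cdf `A^(ω)`:
`φ^(ω)(θ) = (1/M) ∫₀^θ (A^(ω))⁻¹(t) dt` with `M = ∫₀^∞ (1 - A^(ω)(x)) dx`. -/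
noncomputable def condLorenz (μ : Measure ℝ) (ω θ : ℝ) : ℝ :=
  (∫ x in Ioi (0 : ℝ), (1 - condAbsCdf μ ω x))⁻¹ *
    ∫ t in (0 : ℝ)..θ, sInf {x : ℝ | condAbsCdf μ ω x > t}

lemma compl_Icc' (a b : ℝ) : (Icc a b)ᶜ = Iio a ∪ Ioi b := by
  ext y; simp only [mem_compl_iff, mem_Icc, mem_union, mem_Iio, mem_Ioi, not_and_or, not_le]

lemma absCdf'_mono_raw (μ : Measure ℝ) [IsProbabilityMeasure μ] : Monotone (fun x => (μ (Icc (-x) x)).toReal) := by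
  intro x y hxy
  exact ENNReal.toReal_mono (measure_ne_top μ _) (measure_mono (Icc_subset_Icc (by linarith) hxy))

lemma tail_eq (μ : Measure ℝ) [IsProbabilityMeasure μ] (x : ℝ) (hx : 0 ≤ x) :
    1 - (μ (Icc (-x) x)).toReal = (μ (Iio (-x))).toReal + (μ (Ioi x)).toReal := by
  have h1 : (μ (Icc (-x) x)).toReal + (μ ((Icc (-x) x)ᶜ)).toReal = 1 := by
    rw [← ENNReal.toReal_add (measure_ne_top μ _) (measure_ne_top μ _),
      measure_add_measure_compl measurableSet_Icc, measure_univ, ENNReal.toReal_one]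
  have h2 : (μ ((Icc (-x) x)ᶜ)).toReal = (μ (Iio (-x))).toReal + (μ (Ioi x)).toReal := by
    rw [compl_Icc', measure_union ?_ measurableSet_Ioi,
      ENNReal.toReal_add (measure_ne_top μ _) (measure_ne_top μ _)]
    exact Set.disjoint_left.2 (fun y h1 h2 => by simp only [mem_Iio, mem_Ioi] at h1 h2; linarith)
  linarith

lemma tail_tendsto (μ : Measure ℝ) [IsProbabilityMeasure μ] (α c₁ c₂ : ℝ) (hα0 : 0 < α)
    (h₁ : Tendsto (fun x : ℝ => x ^ α * (μ (Iic (-x))).toReal) atTop (nhds c₁))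
    (h₂ : Tendsto (fun x : ℝ => x ^ α * (μ (Ioi x)).toReal) atTop (nhds c₂)) :
    Tendsto (fun x : ℝ => x ^ α * (1 - absCdf' μ x)) atTop (nhds (c₁ + c₂)) := by
  have hu : Tendsto (fun x : ℝ => x ^ α * ((μ (Iic (-x))).toReal + (μ (Ioi x)).toReal))
      atTop (nhds (c₁ + c₂)) := by
    refine (h₁.add h₂).congr fun x => ?_
    ring
  have hratio : Tendsto (fun x : ℝ => (x / (x+1)) ^ α) atTop (nhds 1) := by
    have hinner : Tendsto (fun x : ℝ => x / (x+1)) atTop (nhds 1) := by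
      have h2 : Tendsto (fun x : ℝ => 1 - 1/(x+1)) atTop (nhds (1 - 0)) :=
        tendsto_const_nhds.sub (Tendsto.div_atTop tendsto_const_nhds
          (tendsto_atTop_add_const_right _ 1 tendsto_id))
      rw [sub_zero] at h2
      refine h2.congr' ?_
      filter_upwards [eventually_gt_atTop (0:ℝ)] with x hx
      field_simp
      ring
    have hcont : ContinuousAt (fun y : ℝ => y ^ α) 1 :=
      Real.continuousAt_rpow_const 1 α (Or.inl one_ne_zero)
    have := hcont.tendsto.comp hinner
    rwa [Real.one_rpow] at this
  have hl : Tendsto (fun x : ℝ => x ^ α * ((μ (Iic (-(x+1)))).toReal + (μ (Ioi x)).toReal))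
      atTop (nhds (c₁ + c₂)) := by
    have hcomp : Tendsto (fun x : ℝ => (x+1) ^ α * (μ (Iic (-(x+1)))).toReal) atTop (nhds c₁) :=
      h₁.comp (tendsto_atTop_add_const_right _ 1 tendsto_id)
    have hp : Tendsto (fun x : ℝ => x ^ α * (μ (Iic (-(x+1)))).toReal) atTop (nhds c₁) := by
      have := hratio.mul hcomp
      rw [one_mul] at this
      refine this.congr' ?_
      filter_upwards [eventually_gt_atTop (0:ℝ)] with x hx
      have hx1 : (0:ℝ) < x + 1 := by linarith
      rw [← mul_assoc, ← Real.mul_rpow (div_nonneg hx.le hx1.le) hx1.le,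
        div_mul_cancel₀ _ hx1.ne']
    have := hp.add h₂
    refine this.congr fun x => ?_
    ring
  refine tendsto_of_tendsto_of_tendsto_of_le_of_le' hl hu ?_ ?_
  · filter_upwards [eventually_ge_atTop (0:ℝ)] with x hx
    rw [absCdf', tail_eq μ x hx]
    refine mul_le_mul_of_nonneg_left (add_le_add_left ?_ _) (Real.rpow_nonneg hx _)
    exact ENNReal.toReal_mono (measure_ne_top μ _)
      (measure_mono fun y hy => by simp only [mem_Iic] at hy; simp only [mem_Iio]; linarith)
  · filter_upwards [eventually_ge_atTop (0:ℝ)] with x hx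
    rw [absCdf', tail_eq μ x hx]
    refine mul_le_mul_of_nonneg_left (add_le_add_left ?_ _) (Real.rpow_nonneg hx _)
    exact ENNReal.toReal_mono (measure_ne_top μ _)
      (measure_mono fun y hy => by simp only [mem_Iio] at hy; simp only [mem_Iic]; linarith)

lemma absCdf_tendsto_one (μ : Measure ℝ) [IsProbabilityMeasure μ] (α c₁ c₂ : ℝ) (hα0 : 0 < α)
    (h₁ : Tendsto (fun x : ℝ => x ^ α * (μ (Iic (-x))).toReal) atTop (nhds c₁))
    (h₂ : Tendsto (fun x : ℝ => x ^ α * (μ (Ioi x)).toReal) atTop (nhds c₂)) :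
    Tendsto (absCdf' μ) atTop (nhds 1) := by
  have hT : Tendsto (fun x : ℝ => 1 - absCdf' μ x) atTop (nhds 0) := by
    have hinv : Tendsto (fun x : ℝ => (x ^ α)⁻¹) atTop (nhds 0) :=
      (tendsto_rpow_atTop hα0).inv_tendsto_atTop
    have := hinv.mul (tail_tendsto μ α c₁ c₂ hα0 h₁ h₂)
    rw [zero_mul] at this
    refine this.congr' ?_
    filter_upwards [eventually_gt_atTop (0:ℝ)] with x hx
    have : x ^ α ≠ 0 := (Real.rpow_pos_of_pos hx α).ne'
    field_simp
  have := tendsto_const_nhds.sub hT (f := fun _ : ℝ => (1:ℝ))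
  rw [sub_zero] at this
  refine this.congr fun x => by ring

lemma absCdf'_mono (μ : Measure ℝ) [IsProbabilityMeasure μ] : Monotone (absCdf' μ) := by
  intro x y hxy
  exact ENNReal.toReal_mono (measure_ne_top μ _) (measure_mono (Icc_subset_Icc (by linarith) hxy))

lemma absCdf'_nonneg (μ : Measure ℝ) (x : ℝ) : 0 ≤ absCdf' μ x := ENNReal.toReal_nonneg

lemma condAbsCdf_le_one (μ : Measure ℝ) [IsProbabilityMeasure μ] (ω x : ℝ)
    (hAω : 0 < absCdf' μ ω) : condAbsCdf μ ω x ≤ 1 :=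
  div_le_one_of_le₀ (absCdf'_mono μ (min_le_right x ω)) hAω.le

lemma condAbsCdf_meas (μ : Measure ℝ) [IsProbabilityMeasure μ] (ω : ℝ) :
    Measurable (condAbsCdf μ ω) := by
  have : Monotone (fun x => absCdf' μ (min x ω)) :=
    (absCdf'_mono μ).comp (fun a b hab => min_le_min hab le_rfl)
  exact this.measurable.div_const _

lemma integrand_nonneg (μ : Measure ℝ) [IsProbabilityMeasure μ] (ω x : ℝ)
    (hAω : 0 < absCdf' μ ω) : 0 ≤ 1 - condAbsCdf μ ω x := by
  linarith [condAbsCdf_le_one μ ω x hAω]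

lemma M_integrable (μ : Measure ℝ) [IsProbabilityMeasure μ] (ω : ℝ)
    (hAω : 0 < absCdf' μ ω) :
    IntegrableOn (fun x => 1 - condAbsCdf μ ω x) (Ioi (0:ℝ)) := by
  refine Integrable.mono' (g := (Ioc (0:ℝ) ω).indicator fun _ => (1:ℝ)) ?_ ?_ ?_
  · exact (integrable_indicator_iff measurableSet_Ioc).2 <| by
      simp [integrableOn_const, measure_Ioc_lt_top]
  · exact (measurable_const.sub (condAbsCdf_meas μ ω)).aestronglyMeasurable
  · refine (ae_restrict_iff' measurableSet_Ioi).2 (ae_of_all _ fun x hx => ?_)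
    simp only [mem_Ioi] at hx
    by_cases hxo : x ≤ ω
    · rw [indicator_of_mem (show x ∈ Ioc (0:ℝ) ω from ⟨hx, hxo⟩)]
      rw [Real.norm_eq_abs, abs_of_nonneg (integrand_nonneg μ ω x hAω)]
      have : 0 ≤ condAbsCdf μ ω x := div_nonneg (absCdf'_nonneg μ _) (absCdf'_nonneg μ _)
      linarith
    · push_neg at hxo
      rw [indicator_of_notMem (by simp [hxo.not_ge])]
      have : condAbsCdf μ ω x = 1 := by
        rw [condAbsCdf, min_eq_right (le_of_lt hxo), div_self hAω.ne']
      simp [this]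

lemma M_ge (μ : Measure ℝ) [IsProbabilityMeasure μ] (ω x₀ b : ℝ) (hx0 : 0 < x₀)
    (hAω : 0 < absCdf' μ ω) (f : ℝ → ℝ) (hf : IntegrableOn f (Ioc x₀ b))
    (hle : ∀ x ∈ Ioc x₀ b, f x ≤ 1 - condAbsCdf μ ω x) :
    ∫ x in Ioc x₀ b, f x ≤ ∫ x in Ioi (0:ℝ), (1 - condAbsCdf μ ω x) := by
  have hgi := M_integrable μ ω hAω
  have hsub : Ioc x₀ b ⊆ Ioi (0:ℝ) := fun y hy => lt_trans hx0 hy.1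
  have hgOn : IntegrableOn (fun x => 1 - condAbsCdf μ ω x) (Ioc x₀ b) := hgi.mono_set hsub
  calc ∫ x in Ioc x₀ b, f x ≤ ∫ x in Ioc x₀ b, (1 - condAbsCdf μ ω x) :=
        setIntegral_mono_on hf hgOn measurableSet_Ioc hle
    _ ≤ ∫ x in Ioi (0:ℝ), (1 - condAbsCdf μ ω x) := by
        refine setIntegral_mono_set hgi ?_ (HasSubset.Subset.eventuallyLE hsub)
        exact ae_of_all _ fun x => integrand_nonneg μ ω x hAω

lemma absCdf'_le_one (μ : Measure ℝ) [IsProbabilityMeasure μ] (x : ℝ) : absCdf' μ x ≤ 1 := by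
  rw [absCdf']
  rw [← ENNReal.toReal_one]
  exact ENNReal.toReal_mono ENNReal.one_ne_top prob_le_one

lemma key_pointwise (μ : Measure ℝ) [IsProbabilityMeasure μ] (ω x : ℝ) (hx : x ≤ ω)
    (hAω : 0 < absCdf' μ ω) :
    (1 - absCdf' μ x) - (1 - absCdf' μ ω) ≤ 1 - condAbsCdf μ ω x := by
  rw [condAbsCdf, min_eq_left hx]
  have h1 : absCdf' μ x ≤ absCdf' μ ω := absCdf'_mono μ hx
  have h2 : 1 - absCdf' μ x / absCdf' μ ω = (absCdf' μ ω - absCdf' μ x) / absCdf' μ ω := by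
    field_simp
  rw [h2]
  rw [le_div_iff₀ hAω]
  have := absCdf'_le_one μ ω
  nlinarith

lemma M_atTop (μ : Measure ℝ) [IsProbabilityMeasure μ] (α c₁ c₂ : ℝ) (hα0 : 0 < α) (hα1 : α ≤ 1)
    (h₁ : Tendsto (fun x : ℝ => x ^ α * (μ (Iic (-x))).toReal) atTop (nhds c₁))
    (h₂ : Tendsto (fun x : ℝ => x ^ α * (μ (Ioi x)).toReal) atTop (nhds c₂))
    (hc : 0 < c₁ + c₂) :
    Tendsto (fun ω : ℝ => ∫ x in Ioi (0:ℝ), (1 - condAbsCdf μ ω x)) atTop atTop := by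
  set c := c₁ + c₂ with hcdef
  have hT := tail_tendsto μ α c₁ c₂ hα0 h₁ h₂
  have hA1 := absCdf_tendsto_one μ α c₁ c₂ hα0 h₁ h₂
  -- eventual positivity of A ω
  have hAev : ∀ᶠ ω in atTop, 0 < absCdf' μ ω :=
    hA1.eventually (eventually_gt_nhds (by norm_num : (0:ℝ) < 1))
  -- extraction of x₀ for given ε
  have hx₀ : ∀ ε > 0, ∃ x₀ : ℝ, 1 ≤ x₀ ∧ ∀ x ≥ x₀,
      c - ε ≤ x ^ α * (1 - absCdf' μ x) ∧ x ^ α * (1 - absCdf' μ x) ≤ c + ε := by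
    intro ε hε
    have h := Metric.tendsto_nhds.mp hT ε hε
    rcases eventually_atTop.mp (h.and (eventually_ge_atTop (1:ℝ))) with ⟨a, ha⟩
    refine ⟨max a 1, le_max_right _ _, fun x hx => ?_⟩
    have := ha x (le_trans (le_max_left a 1) hx)
    rw [Real.dist_eq, abs_lt] at this
    constructor <;> linarith [this.1.1, this.1.2]
  -- tail bounds in the convenient form
  have tail_lb : ∀ x₀ : ℝ, 1 ≤ x₀ →
      (∀ x ≥ x₀, c - (1:ℝ) ≤ x ^ α * (1 - absCdf' μ x)) → True := fun _ _ _ => trivial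
  rcases lt_or_eq_of_le hα1 with hlt | heq
  · -- case α < 1
    set s := (2:ℝ) ^ α with hs
    have hs1 : 1 < s := Real.one_lt_rpow_iff_of_pos two_pos |>.2 (Or.inl ⟨one_lt_two, hα0⟩)
    have hs0 : 0 < s - 1 := by linarith
    set ε := c * (s - 1) / (2 * (s + 1)) with hεdef
    have hε : 0 < ε := div_pos (mul_pos hc hs0) (by linarith)
    set κ := c * (s - 1) / 2 with hκdef
    have hκ : 0 < κ := div_pos (mul_pos hc hs0) (by norm_num)
    obtain ⟨x₀, hx₀1, hbnd⟩ := hx₀ ε hε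
    have hx₀0 : (0:ℝ) < x₀ := by linarith
    -- eventual lower bound
    have hev : ∀ᶠ ω in atTop, (κ/4) * ω ^ (1 - α) ≤ ∫ x in Ioi (0:ℝ), (1 - condAbsCdf μ ω x) := by
      filter_upwards [hAev, eventually_ge_atTop (4 * x₀)] with ω hAω hω4
      have hω0 : (0:ℝ) < ω := by linarith
      have hωα : (0:ℝ) < ω ^ α := Real.rpow_pos_of_pos hω0 α
      have hωmα : (0:ℝ) < ω ^ (-α) := Real.rpow_pos_of_pos hω0 (-α)
      have hhalf : x₀ ≤ ω / 2 := by linarith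
      -- pointwise const bound on Ioc x₀ (ω/2)
      have hptwise : ∀ x ∈ Ioc x₀ (ω/2), κ * ω ^ (-α) ≤ 1 - condAbsCdf μ ω x := by
        intro x hx
        have hxω : x ≤ ω := le_trans hx.2 (by linarith)
        refine le_trans ?_ (key_pointwise μ ω x hxω hAω)
        -- κ * ω^(-α) ≤ T x - T ω
        have hTmono : 1 - absCdf' μ (ω/2) ≤ 1 - absCdf' μ x := by
          have := absCdf'_mono μ hx.2
          linarith
        have hlb : c - ε ≤ (ω/2) ^ α * (1 - absCdf' μ (ω/2)) := (hbnd (ω/2) hhalf).1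
        have hub : ω ^ α * (1 - absCdf' μ ω) ≤ c + ε := (hbnd ω (by linarith)).2
        have hhalfpos : (0:ℝ) < ω / 2 := by linarith
        have hhαpos : (0:ℝ) < (ω/2) ^ α := Real.rpow_pos_of_pos hhalfpos α
        have e1 : (c - ε) / (ω/2) ^ α ≤ 1 - absCdf' μ (ω/2) := by
          rw [div_le_iff₀ hhαpos]; linarith
        have e2 : 1 - absCdf' μ ω ≤ (c + ε) / ω ^ α := by
          rw [le_div_iff₀ hωα]; linarith
        have e3 : (c - ε) / (ω/2) ^ α = (c - ε) * (s * ω ^ (-α)) := by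
          rw [div_eq_mul_inv, ← Real.rpow_neg hhalfpos.le]
          congr 1
          rw [div_eq_mul_inv ω 2, Real.mul_rpow hω0.le (by positivity),
            Real.inv_rpow (by norm_num : (0:ℝ) ≤ 2),
            Real.rpow_neg (by norm_num : (0:ℝ) ≤ 2), inv_inv, hs]
          ring
        have e4 : (c + ε) / ω ^ α = (c + ε) * ω ^ (-α) := by
          rw [div_eq_mul_inv, ← Real.rpow_neg hω0.le]
        have hκeq : (c - ε) * s - (c + ε) = κ := by
          rw [hεdef, hκdef]; field_simp; ring
        have : κ * ω ^ (-α) = (c - ε) * (s * ω ^ (-α)) - (c + ε) * ω ^ (-α) := by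
          rw [← hκeq]; ring
        rw [this]
        have f1 : (c - ε) * (s * ω ^ (-α)) ≤ 1 - absCdf' μ (ω/2) := e3 ▸ e1
        have f2 : 1 - absCdf' μ ω ≤ (c + ε) * ω ^ (-α) := e4 ▸ e2
        exact sub_le_sub (f1.trans hTmono) f2
      -- integrate the constant
      have hint : IntegrableOn (fun _ : ℝ => κ * ω ^ (-α)) (Ioc x₀ (ω/2)) := by
        refine integrableOn_const ?_
        exact measure_Ioc_lt_top.ne
      have := M_ge μ ω x₀ (ω/2) hx₀0 hAω _ hint hptwise
      have hconst : ∫ _ in Ioc x₀ (ω/2), κ * ω ^ (-α) = (ω/2 - x₀) * (κ * ω ^ (-α)) := by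
        rw [setIntegral_const, measureReal_def, Real.volume_Ioc, ENNReal.toReal_ofReal (by linarith), smul_eq_mul]
      rw [hconst] at this
      refine le_trans ?_ this
      have h14 : ω/4 ≤ ω/2 - x₀ := by linarith
      have e5 : (κ/4) * ω ^ (1-α) = (ω/4) * (κ * ω ^ (-α)) := by
        rw [Real.rpow_sub hω0, Real.rpow_one, Real.rpow_neg hω0.le]
        field_simp
      rw [e5]
      exact mul_le_mul_of_nonneg_right h14 (by positivity)
    refine tendsto_atTop_mono' _ hev ?_
    exact (tendsto_rpow_atTop (by linarith)).const_mul_atTop (by positivity)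
  · -- case α = 1
    subst heq
    set ε := c / 2 with hεdef
    have hε : 0 < ε := by positivity
    obtain ⟨x₀, hx₀1, hbnd⟩ := hx₀ ε hε
    have hx₀0 : (0:ℝ) < x₀ := by linarith
    have hev : ∀ᶠ ω in atTop,
        (c - ε) * Real.log (ω / (2 * x₀)) - (c + ε) / 2
          ≤ ∫ x in Ioi (0:ℝ), (1 - condAbsCdf μ ω x) := by
      filter_upwards [hAev, eventually_ge_atTop (4 * x₀)] with ω hAω hω4
      have hω0 : (0:ℝ) < ω := by linarith
      have hhalf : x₀ ≤ ω / 2 := by linarith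
      have hhalfpos : (0:ℝ) < ω / 2 := by linarith
      set f : ℝ → ℝ := fun x => (c - ε) * x⁻¹ - (c + ε) * ω⁻¹ with hfdef
      have hfint : IntegrableOn f (Ioc x₀ (ω/2)) := by
        refine Integrable.sub ?_ (integrableOn_const measure_Ioc_lt_top.ne)
        refine Integrable.const_mul ?_ _
        refine Measure.integrableOn_of_bounded (M := x₀⁻¹) measure_Ioc_lt_top.ne
          measurable_inv.aestronglyMeasurable ?_
        refine (ae_restrict_iff' measurableSet_Ioc).2 (ae_of_all _ fun x hx => ?_)
        have hx0' : (0:ℝ) < x := lt_of_lt_of_le hx₀0 hx.1.le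
        rw [Real.norm_eq_abs, abs_of_nonneg (by positivity : (0:ℝ) ≤ x⁻¹)]
        exact inv_anti₀ hx₀0 hx.1.le
      have hptwise : ∀ x ∈ Ioc x₀ (ω/2), f x ≤ 1 - condAbsCdf μ ω x := by
        intro x hx
        have hx0 : (0:ℝ) < x := lt_trans hx₀0 hx.1
        have hxω : x ≤ ω := le_trans hx.2 (by linarith)
        refine le_trans ?_ (key_pointwise μ ω x hxω hAω)
        have hlb : c - ε ≤ x ^ (1:ℝ) * (1 - absCdf' μ x) := (hbnd x hx.1.le).1
        have hub : ω ^ (1:ℝ) * (1 - absCdf' μ ω) ≤ c + ε := (hbnd ω (by linarith)).2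
        rw [Real.rpow_one] at hlb hub
        have e1 : (c - ε) * x⁻¹ ≤ 1 - absCdf' μ x := by
          rw [mul_inv_le_iff₀ hx0]; linarith
        have e2 : 1 - absCdf' μ ω ≤ (c + ε) * ω⁻¹ := by
          rw [le_mul_inv_iff₀ hω0]; linarith
        simp only [hfdef]
        linarith
      have := M_ge μ ω x₀ (ω/2) hx₀0 hAω f hfint hptwise
      refine le_trans ?_ this
      have hvol : (volume (Ioc x₀ (ω/2))).toReal = ω/2 - x₀ := by
        rw [Real.volume_Ioc, ENNReal.toReal_ofReal (by linarith)]
      have hinv : IntegrableOn (fun x : ℝ => (c - ε) * x⁻¹) (Ioc x₀ (ω/2)) := by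
        refine Integrable.const_mul ?_ _
        refine Measure.integrableOn_of_bounded (M := x₀⁻¹) measure_Ioc_lt_top.ne
          measurable_inv.aestronglyMeasurable ?_
        refine (ae_restrict_iff' measurableSet_Ioc).2 (ae_of_all _ fun x hx => ?_)
        have hx0' : (0:ℝ) < x := lt_of_lt_of_le hx₀0 hx.1.le
        rw [Real.norm_eq_abs, abs_of_nonneg (by positivity : (0:ℝ) ≤ x⁻¹)]
        exact inv_anti₀ hx₀0 hx.1.le
      have hconstint : IntegrableOn (fun _ : ℝ => (c + ε) * ω⁻¹) (Ioc x₀ (ω/2)) :=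
        integrableOn_const measure_Ioc_lt_top.ne
      have hI : ∫ x in Ioc x₀ (ω/2), x⁻¹ = Real.log (ω / (2 * x₀)) := by
        rw [← intervalIntegral.integral_of_le hhalf, integral_inv_of_pos hx₀0 hhalfpos,
          div_div]
      have hsplit : ∫ x in Ioc x₀ (ω/2), f x
          = (c - ε) * Real.log (ω / (2 * x₀)) - (ω/2 - x₀) * ((c + ε) * ω⁻¹) := by
        simp only [hfdef]
        rw [integral_sub hinv hconstint, MeasureTheory.integral_const_mul, hI,
          setIntegral_const, measureReal_def, hvol, smul_eq_mul]
      rw [hsplit]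
      have hB : (ω/2 - x₀) * ((c + ε) * ω⁻¹) ≤ (c + ε) / 2 := by
        have h1 : (ω/2 - x₀) * ω⁻¹ ≤ 1/2 := by
          rw [sub_mul, div_mul_eq_mul_div, mul_comm ω ω⁻¹, inv_mul_cancel₀ hω0.ne']
          have : 0 ≤ x₀ * ω⁻¹ := by positivity
          linarith
        calc (ω/2 - x₀) * ((c + ε) * ω⁻¹) = ((ω/2 - x₀) * ω⁻¹) * (c + ε) := by ring
          _ ≤ (1/2) * (c + ε) := by
              refine mul_le_mul_of_nonneg_right h1 (by linarith)
          _ = (c + ε) / 2 := by ring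
      linarith
    refine tendsto_atTop_mono' _ hev ?_
    have hlog : Tendsto (fun ω : ℝ => Real.log (ω / (2 * x₀))) atTop atTop :=
      Real.tendsto_log_atTop.comp (tendsto_id.atTop_div_const (by positivity))
    exact (hlog.const_mul_atTop (by linarith)).atTop_add tendsto_const_nhds


/-- a weak Pareto law of exponent `α ∈ (0,1]` is maximally
concentrated: the Lorenz curve of its conditional restriction to `(-ω,ω)`
tends to `0` pointwise on `(0,1)` as `ω → ∞`. -/
theorem weakPareto_maximally_concentrated
    (μ : Measure ℝ) [IsProbabilityMeasure μ]
    (α c₁ c₂ : ℝ) (hα0 : 0 < α) (hα1 : α ≤ 1)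
    (h₁ : Tendsto (fun x : ℝ => x ^ α * (μ (Iic (-x))).toReal) atTop (nhds c₁))
    (h₂ : Tendsto (fun x : ℝ => x ^ α * (μ (Ioi x)).toReal) atTop (nhds c₂))
    (hc : 0 < c₁ + c₂) :
    ∀ θ ∈ Ioo (0 : ℝ) 1,
      Tendsto (fun ω : ℝ => condLorenz μ ω θ) atTop (nhds 0) := by
  intro θ hθ
  obtain ⟨hθ0, hθ1⟩ := hθ
  have hM := M_atTop μ α c₁ c₂ hα0 hα1 h₁ h₂ hc
  have hMinv : Tendsto (fun ω : ℝ => (∫ x in Ioi (0:ℝ), (1 - condAbsCdf μ ω x))⁻¹)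
      atTop (nhds 0) := hM.inv_tendsto_atTop
  have hA1 := absCdf_tendsto_one μ α c₁ c₂ hα0 h₁ h₂
  obtain ⟨q, hq1, hqθ⟩ : ∃ q : ℝ, 1 ≤ q ∧ θ < absCdf' μ q := by
    rcases ((hA1.eventually (eventually_gt_nhds hθ1)).and (eventually_ge_atTop (1:ℝ))).exists
      with ⟨q, h1, h2⟩
    exact ⟨q, h2, h1⟩
  have hNbd : ∀ᶠ ω in atTop,
      |∫ t in (0:ℝ)..θ, sInf {x : ℝ | condAbsCdf μ ω x > t}| ≤ q * |θ - 0| := by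
    filter_upwards [eventually_ge_atTop q, hA1.eventually (eventually_gt_nhds hθ1)]
      with ω hωq hAω'
    have hAωpos : 0 < absCdf' μ ω := lt_trans hθ0 hAω'
    have hω0 : (0:ℝ) < ω := lt_of_lt_of_le (lt_of_lt_of_le one_pos hq1) hωq
    rw [← Real.norm_eq_abs]
    refine intervalIntegral.norm_integral_le_of_norm_le_const fun t ht => ?_
    rw [uIoc_of_le hθ0.le] at ht
    set S := {x : ℝ | condAbsCdf μ ω x > t} with hSdef
    have hqS : q ∈ S := by
      show t < condAbsCdf μ ω q
      rw [condAbsCdf, min_eq_left hωq]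
      have h1 : absCdf' μ q ≤ absCdf' μ q / absCdf' μ ω := by
        rw [le_div_iff₀ hAωpos]
        exact mul_le_of_le_one_right (absCdf'_nonneg μ q) (absCdf'_le_one μ ω)
      calc t ≤ θ := ht.2
        _ < absCdf' μ q := hqθ
        _ ≤ _ := h1
    have hS0 : ∀ x ∈ S, (0:ℝ) ≤ x := by
      intro x hx
      by_contra hneg
      push_neg at hneg
      have hz : condAbsCdf μ ω x = 0 := by
        rw [condAbsCdf, min_eq_left (le_of_lt (lt_trans hneg hω0)), absCdf',
          Icc_eq_empty (not_le.2 (by linarith : x < -x))]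
        simp
      have hx' : t < condAbsCdf μ ω x := hx
      rw [hz] at hx'
      linarith [ht.1]
    have h0le : (0:ℝ) ≤ sInf S := le_csInf ⟨q, hqS⟩ hS0
    have hle : sInf S ≤ q := csInf_le ⟨0, hS0⟩ hqS
    rw [Real.norm_eq_abs, abs_of_nonneg h0le]
    exact hle
  have hg : Tendsto (fun ω : ℝ =>
      |(∫ x in Ioi (0:ℝ), (1 - condAbsCdf μ ω x))⁻¹| * (q * |θ - 0|)) atTop (nhds 0) := by
    have := (hMinv.abs).mul_const (q * |θ - 0|)
    simpa using this
  refine squeeze_zero_norm' ?_ hg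
  filter_upwards [hNbd] with ω hN
  rw [condLorenz, Real.norm_eq_abs, abs_mul]
  exact mul_le_mul_of_nonneg_left hN (abs_nonneg _)
end
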